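/- Let D be an oriented graph (finite or countably infinite, without symmetric arcs) and let x be a vertex such that V(D) \ {x} is not an identifying code of D. Then either x is a source (has no in-neighbour), or there exists a unique vertex x₋₁ ≠ x such that B₁⁺(x) = B₁⁺(x₋₁) ∪ {x}. -/

import Mathlib

/-
If `V(D) \ {x}` fails to separate `u ≠ v`, the balls `B₁⁺(u)` and `B₁⁺(v)` differ only in `x`, say
`B₁⁺(u) = B₁⁺(v) ∪ {x}`. Were `u ≠ x`, then `v ∈ B₁⁺(u)` and `u ∈ B₁⁺(v)`, a symmetric pair of
arcs; so `u = x` and `v` is a father of `x`. A father `w` never has `x ∈ B₁⁺(w)`, so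
`B₁⁺(w) = B₁⁺(x) \ {x}`, and twin-freeness makes it unique. If instead some ball misses
`V(D) \ {x}`, that ball is `B₁⁺(x) ⊆ {x}`, i.e. `x` is a source.
-/

def inBall {V : Type} (A : V → V → Prop) (x : V) : Set V := insert x {w | A w x}

def IsSepCode {V : Type} (A : V → V → Prop) (C : Set V) : Prop :=
  ∀ u v : V, u ≠ v → inBall A u ∩ C ≠ inBall A v ∩ C

def IsIdCode {V : Type} (A : V → V → Prop) (C : Set V) : Prop :=
  (∀ u : V, (inBall A u ∩ C).Nonempty) ∧ IsSepCode A C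

def TwinFree {V : Type} (A : V → V → Prop) : Prop :=
  ∀ u v : V, u ≠ v → inBall A u ≠ inBall A v

theorem Set.eq_insert_or_eq_insert_of_sdiff_singleton_eq {α : Type*} {s t : Set α} {x : α}
    (h : s \ {x} = t \ {x}) (hne : s ≠ t) : s = insert x t ∨ t = insert x s := by
  by_cases hs : x ∈ s
  · left
    rw [← Set.insert_sdiff_self_of_mem hs, h, Set.insert_sdiff_singleton]
  by_cases ht : x ∈ t
  · right
    rw [← Set.insert_sdiff_self_of_mem ht, ← h, Set.insert_sdiff_singleton]
  exact absurd (by rw [← Set.sdiff_singleton_eq_self hs, h, Set.sdiff_singleton_eq_self ht]) hne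

def IsOriented {V : Type} (A : V → V → Prop) : Prop :=
  ∀ u v : V, ¬ (A u v ∧ A v u)

section

variable {V : Type} {A : V → V → Prop} {u v w x : V}

theorem mem_inBall_self : x ∈ inBall A x := Set.mem_insert x _

theorem mem_inBall_of_ne (h : u ∈ inBall A v) (hne : u ≠ v) : A u v :=
  (Set.mem_insert_iff.1 h).resolve_left hne

theorem IsOriented.irrefl (hor : IsOriented A) (x : V) : ¬ A x x :=
  fun h => hor x x ⟨h, h⟩

theorem IsOriented.eq_of_mem_inBall_of_mem_inBall (hor : IsOriented A)
    (hvu : v ∈ inBall A u) (huv : u ∈ inBall A v) : u = v := by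
  by_contra hne
  exact hor u v ⟨mem_inBall_of_ne huv hne, mem_inBall_of_ne hvu (Ne.symm hne)⟩

theorem IsOriented.twinFree (hor : IsOriented A) : TwinFree A := fun _ _ hne h =>
  hne (hor.eq_of_mem_inBall_of_mem_inBall (h ▸ mem_inBall_self) (h ▸ mem_inBall_self))

theorem IsOriented.eq_of_inBall_eq_insert (hor : IsOriented A) (hne : u ≠ v)
    (h : inBall A u = insert x (inBall A v)) : u = x := by
  by_contra hux
  have hvu : v ∈ inBall A u := h ▸ Set.mem_insert_of_mem x mem_inBall_self
  have huv : u ∈ inBall A v :=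
    (Set.mem_insert_iff.1 (h ▸ (mem_inBall_self : u ∈ inBall A u))).resolve_left hux
  exact hne (hor.eq_of_mem_inBall_of_mem_inBall hvu huv)

theorem IsOriented.exists_father_of_not_isSepCode (hor : IsOriented A)
    (h : ¬ IsSepCode A ({x}ᶜ : Set V)) :
    ∃ w, w ≠ x ∧ inBall A x = insert x (inBall A w) := by
  simp only [IsSepCode, not_forall, not_not, ← Set.sdiff_eq] at h
  obtain ⟨u, v, hne, hsep⟩ := h
  rcases Set.eq_insert_or_eq_insert_of_sdiff_singleton_eq hsep (hor.twinFree u v hne) with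
    hball | hball
  · obtain rfl := hor.eq_of_inBall_eq_insert hne hball
    exact ⟨v, hne.symm, hball⟩
  · obtain rfl := hor.eq_of_inBall_eq_insert hne.symm hball
    exact ⟨u, hne, hball⟩

theorem IsOriented.inBall_eq_sdiff_of_inBall_eq_insert (hor : IsOriented A) (hwx : w ≠ x)
    (h : inBall A x = insert x (inBall A w)) : inBall A w = inBall A x \ {x} := by
  have hxw : x ∉ inBall A w := fun hxw =>
    hwx (hor.eq_of_mem_inBall_of_mem_inBall hxw (h ▸ Set.mem_insert_of_mem x mem_inBall_self))
  rw [h, Set.insert_sdiff_self_of_notMem hxw]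

theorem IsOriented.father_unique (hor : IsOriented A) (hwx : w ≠ x) (hvx : v ≠ x)
    (hw : inBall A x = insert x (inBall A w)) (hv : inBall A x = insert x (inBall A v)) :
    v = w := by
  by_contra hne
  apply hor.twinFree v w hne
  rw [hor.inBall_eq_sdiff_of_inBall_eq_insert hvx hv,
    hor.inBall_eq_sdiff_of_inBall_eq_insert hwx hw]

theorem IsOriented.isSource_of_not_nonempty (hor : IsOriented A)
    (h : ¬ (inBall A u ∩ ({x}ᶜ : Set V)).Nonempty) : ∀ w, ¬ A w x := by
  have hux : u = x := by
    by_contra hux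
    exact h ⟨u, mem_inBall_self, hux⟩
  subst hux
  intro w hwu
  have hwx : w ≠ u := by
    rintro rfl
    exact hor.irrefl w hwu
  exact h ⟨w, Set.mem_insert_of_mem u hwu, hwx⟩

end

theorem father_of_not_idCode_general {V : Type} (A : V → V → Prop)
    (hor : ∀ u v : V, ¬ (A u v ∧ A v u)) (x : V)
    (hx : ¬ IsIdCode A ({x}ᶜ : Set V)) :
    (∀ w : V, ¬ A w x) ∨
      (∃! u : V, u ≠ x ∧ inBall A x = insert x (inBall A u)) := by
  have hor : IsOriented A := hor
  rw [IsIdCode, not_and_or, not_forall] at hx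
  rcases hx with ⟨u, hdom⟩ | hsep
  · exact Or.inl (hor.isSource_of_not_nonempty hdom)
  · obtain ⟨w, hwx, hw⟩ := hor.exists_father_of_not_isSepCode hsep
    exact Or.inr ⟨w, ⟨hwx, hw⟩, fun v ⟨hvx, hv⟩ => hor.father_unique hwx hvx hw hv⟩

/-- In a (finite or countably infinite) oriented graph, if `V(D) - x` is not an
identifying code then either `x` is a source, or there is a unique vertex `x₋₁ ≠ x` with
`B₁⁺(x) = B₁⁺(x₋₁) ∪ {x}`. -/
theorem father_of_not_idCode {V : Type} [Countable V] (A : V → V → Prop)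
    (hor : ∀ u v : V, ¬ (A u v ∧ A v u)) (x : V)
    (hx : ¬ IsIdCode A ({x}ᶜ : Set V)) :
    (∀ w : V, ¬ A w x) ∨
      (∃! u : V, u ≠ x ∧ inBall A x = insert x (inBall A u)) :=
  father_of_not_idCode_general A hor x hx
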